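/- Suppose 𝒜 satisfies the RIP with constant δ ∈ (0,1), let v ∈ ℝ^{n2} be a unit vector, and let u ∈ ℝ^{n1} satisfy the normal equation u = ⟨v,v_⋆⟩u_⋆ + [(Id − 𝒜*𝒜)(uvᵀ − u_⋆v_⋆ᵀ)]v. Then: (a) ‖u − ⟨v_⋆,v⟩u_⋆‖ ≤ (δ/(1−δ))·‖v^⊥‖; (b) ‖u^⊥‖ ≤ (δ/(1−δ))·‖v^⊥‖; and (c) if moreover δ ≤ 1/2, then ‖u‖ ≤ 2. -/

import Mathlib

/-!
Write `w = u - ⟨v⋆, v⟩ u⋆` and `Z = u vᵀ - u⋆ v⋆ᵀ`. The normal equation says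
`w = [(Id - 𝒜*𝒜) Z] v`, so `‖w‖² = ⟨Z, w vᵀ⟩_F - ⟨𝒜 Z, 𝒜 (w vᵀ)⟩`. Every combination
`s Z + t w vᵀ` has rank at most 2, so the RIP, polarized, bounds this by `δ ‖Z‖_F ‖w‖`; and
`Z = w vᵀ + u⋆ (⟨v⋆, v⟩ v - v⋆)ᵀ` gives `‖Z‖_F ≤ ‖w‖ + ‖v^⊥‖`. Hence `‖w‖ ≤ δ (‖w‖ + ‖v^⊥‖)`,
which is (a). Part (b) holds because `u^⊥` is the best approximation of `u` by multiples of
`u⋆`, and (c) because `‖u‖ ≤ ‖w‖ + 1`.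
-/

open MeasureTheory ProbabilityTheory Matrix Finset
open scoped BigOperators ENNReal NNReal RealInnerProductSpace

noncomputable section

namespace ALSPaper

/-- View a plain vector as an element of Euclidean space. -/
def toE {n : ℕ} (x : Fin n → ℝ) : EuclideanSpace ℝ (Fin n) :=
  (WithLp.equiv 2 (Fin n → ℝ)).symm x

/-- View an element of Euclidean space as a plain vector. -/
def ofE {n : ℕ} (x : EuclideanSpace ℝ (Fin n)) : Fin n → ℝ :=
  WithLp.equiv 2 (Fin n → ℝ) x

/-- The first standard basis vector. -/
def e1 (n : ℕ) : EuclideanSpace ℝ (Fin n) :=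
  toE fun i => if (i : ℕ) = 0 then 1 else 0

/-- Frobenius inner product. -/
def frobInner {n1 n2 : ℕ} (A B : Matrix (Fin n1) (Fin n2) ℝ) : ℝ :=
  ∑ i, ∑ j, A i j * B i j

/-- Frobenius norm. -/
def frobNorm {n1 n2 : ℕ} (A : Matrix (Fin n1) (Fin n2) ℝ) : ℝ :=
  Real.sqrt (frobInner A A)

/-- The measurement operator. -/
def calA {n1 n2 m : ℕ} (A : Fin m → Matrix (Fin n1) (Fin n2) ℝ)
    (X : Matrix (Fin n1) (Fin n2) ℝ) : EuclideanSpace ℝ (Fin m) :=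
  toE fun i => (Real.sqrt m)⁻¹ * frobInner (A i) X

/-- The adjoint of the measurement operator. -/
def calAdj {n1 n2 m : ℕ} (A : Fin m → Matrix (Fin n1) (Fin n2) ℝ)
    (w : EuclideanSpace ℝ (Fin m)) : Matrix (Fin n1) (Fin n2) ℝ :=
  ∑ i, ((Real.sqrt m)⁻¹ * ofE w i) • A i

/-- The restricted isometry property (RIP) with constant `δ` (for rank ≤ 4). -/
def HasRIP {n1 n2 m : ℕ} (A : Fin m → Matrix (Fin n1) (Fin n2) ℝ) (δ : ℝ) : Prop :=
  ∀ Z : Matrix (Fin n1) (Fin n2) ℝ, Z.rank ≤ 4 →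
    (1 - δ) * frobNorm Z ^ 2 ≤ ‖calA A Z‖ ^ 2 ∧ ‖calA A Z‖ ^ 2 ≤ (1 + δ) * frobNorm Z ^ 2

/-- Component of `v` parallel to the first standard basis vector. -/
def par {n : ℕ} (v : EuclideanSpace ℝ (Fin n)) : EuclideanSpace ℝ (Fin n) :=
  ⟪e1 n, v⟫ • e1 n

/-- Component of `v` orthogonal to the first standard basis vector. -/
def perp {n : ℕ} (v : EuclideanSpace ℝ (Fin n)) : EuclideanSpace ℝ (Fin n) :=
  v - par v

/-- The "diagonal block" part of a measurement matrix. -/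
def Dmat {n1 n2 : ℕ} (A : Matrix (Fin n1) (Fin n2) ℝ) : Matrix (Fin n1) (Fin n2) ℝ :=
  vecMulVec (ofE (e1 n1)) (ofE (e1 n1)) * A * vecMulVec (ofE (e1 n2)) (ofE (e1 n2))
    + (1 - vecMulVec (ofE (e1 n1)) (ofE (e1 n1))) * A *
        (1 - vecMulVec (ofE (e1 n2)) (ofE (e1 n2)))

/-- The "off-diagonal block" part of a measurement matrix. -/
def Omat {n1 n2 : ℕ} (A : Matrix (Fin n1) (Fin n2) ℝ) : Matrix (Fin n1) (Fin n2) ℝ :=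
  vecMulVec (ofE (e1 n1)) (ofE (e1 n1)) * A * (1 - vecMulVec (ofE (e1 n2)) (ofE (e1 n2)))
    + (1 - vecMulVec (ofE (e1 n1)) (ofE (e1 n1))) * A * vecMulVec (ofE (e1 n2)) (ofE (e1 n2))

/-- The (1,1) entry of a matrix. -/
def ent11 {n1 n2 : ℕ} (A : Matrix (Fin n1) (Fin n2) ℝ) : ℝ :=
  frobInner (vecMulVec (ofE (e1 n1)) (ofE (e1 n2))) A

/-- Spectral (operator) norm of a matrix. -/
def specNorm {n1 n2 : ℕ} (M : Matrix (Fin n1) (Fin n2) ℝ) : ℝ :=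
  ‖LinearMap.toContinuousLinearMap (Matrix.toEuclideanLin M)‖

/-- The normal equation for the least-squares update. -/
def NormalEq {n1 n2 m : ℕ} (A : Fin m → Matrix (Fin n1) (Fin n2) ℝ)
    (u : EuclideanSpace ℝ (Fin n1)) (v : EuclideanSpace ℝ (Fin n2)) : Prop :=
  u = ⟪v, e1 n2⟫ • e1 n1 +
    toE (((vecMulVec (ofE u) (ofE v) - vecMulVec (ofE (e1 n1)) (ofE (e1 n2))) -
      calAdj A (calA A (vecMulVec (ofE u) (ofE v) - vecMulVec (ofE (e1 n1)) (ofE (e1 n2)))))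
        *ᵥ ofE v)

/-- sin of the angle between two vectors. -/
def sinAngle {n : ℕ} (a b : EuclideanSpace ℝ (Fin n)) : ℝ :=
  Real.sqrt (1 - ⟪a, b⟫ ^ 2 / (‖a‖ ^ 2 * ‖b‖ ^ 2))

/-- `c_t` sequence. -/
def cseq (n2 t : ℕ) : ℝ := (1 + 1 / Real.log n2) ^ t - 1

/-- ALS iterates. -/
def IsALS {n1 n2 m : ℕ} (A : Fin m → Matrix (Fin n1) (Fin n2) ℝ)
    (y : EuclideanSpace ℝ (Fin m)) (v0 : EuclideanSpace ℝ (Fin n2))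
    (u : ℕ → EuclideanSpace ℝ (Fin n1)) (v : ℕ → EuclideanSpace ℝ (Fin n2))
    (uh : ℕ → EuclideanSpace ℝ (Fin n1)) (vh : ℕ → EuclideanSpace ℝ (Fin n2)) : Prop :=
  v 0 = v0 ∧
  ∀ t : ℕ,
    (∀ u' : EuclideanSpace ℝ (Fin n1),
      ‖y - calA A (vecMulVec (ofE (uh t)) (ofE (v t)))‖ ≤
        ‖y - calA A (vecMulVec (ofE u') (ofE (v t)))‖) ∧
    u (t + 1) = ‖uh t‖⁻¹ • uh t ∧
    (∀ v' : EuclideanSpace ℝ (Fin n2),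
      ‖y - calA A (vecMulVec (ofE (u (t + 1))) (ofE (vh t)))‖ ≤
        ‖y - calA A (vecMulVec (ofE (u (t + 1))) (ofE v'))‖) ∧
    v (t + 1) = ‖vh t‖⁻¹ • vh t

end ALSPaper

theorem Matrix.rank_add_le {m n K : Type*} [Fintype n] [Field K] (A B : Matrix m n K) :
    (A + B).rank ≤ A.rank + B.rank := by
  refine (Submodule.finrank_mono ?_).trans
    (Submodule.finrank_add_le_finrank_add_finrank (LinearMap.range A.mulVecLin)
      (LinearMap.range B.mulVecLin))
  rintro _ ⟨x, rfl⟩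
  exact Submodule.mem_sup.2 ⟨A *ᵥ x, ⟨x, rfl⟩, B *ᵥ x, ⟨x, rfl⟩, (Matrix.add_mulVec A B x).symm⟩

theorem Matrix.rank_vecMulVec_add_vecMulVec_le {m n K : Type*} [Fintype n] [Field K]
    (a c : m → K) (b d : n → K) : (vecMulVec a b + vecMulVec c d).rank ≤ 2 :=
  (Matrix.rank_add_le _ _).trans (add_le_add (rank_vecMulVec_le a b) (rank_vecMulVec_le c d))

theorem norm_smul_add_smul_sq {E : Type*} [NormedAddCommGroup E] [InnerProductSpace ℝ E]
    (x y : E) (s t : ℝ) :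
    ‖s • x + t • y‖ ^ 2 = s ^ 2 * ‖x‖ ^ 2 + 2 * s * t * ⟪x, y⟫ + t ^ 2 * ‖y‖ ^ 2 := by
  rw [norm_add_sq_real, norm_smul, norm_smul, real_inner_smul_left, real_inner_smul_right,
    mul_pow, mul_pow, Real.norm_eq_abs, Real.norm_eq_abs, sq_abs, sq_abs]
  ring

theorem abs_inner_sub_inner_le_of_forall_abs_norm_sq_sub_le
    {E F : Type*} [NormedAddCommGroup E] [InnerProductSpace ℝ E]
    [NormedAddCommGroup F] [InnerProductSpace ℝ F] {δ : ℝ} {x y : E} {x' y' : F}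
    (h : ∀ s t : ℝ, |‖s • x' + t • y'‖ ^ 2 - ‖s • x + t • y‖ ^ 2| ≤ δ * ‖s • x + t • y‖ ^ 2) :
    |⟪x', y'⟫ - ⟪x, y⟫| ≤ δ * (‖x‖ * ‖y‖) := by
  rcases eq_or_ne x 0 with rfl | hx
  · have hx' : x' = 0 := by simpa using h 1 0
    simp [hx']
  rcases eq_or_ne y 0 with rfl | hy
  · have hy' : y' = 0 := by simpa using h 0 1
    simp [hy']
  have hab : 0 < ‖x‖ * ‖y‖ := mul_pos (norm_pos_iff.2 hx) (norm_pos_iff.2 hy)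
  -- test the bound at `‖y‖ x ± ‖x‖ y`, where the norm terms cancel in the difference
  have hplus := abs_le.1 (h ‖y‖ ‖x‖)
  have hminus := abs_le.1 (h ‖y‖ (-‖x‖))
  simp only [norm_smul_add_smul_sq] at hplus hminus
  have key : |‖x‖ * ‖y‖ * (⟪x', y'⟫ - ⟪x, y⟫)| ≤ ‖x‖ * ‖y‖ * (δ * (‖x‖ * ‖y‖)) :=
    abs_le.2 ⟨by linarith [hplus.1, hminus.2], by linarith [hplus.2, hminus.1]⟩
  rw [abs_mul, abs_of_pos hab] at key
  exact le_of_mul_le_mul_left key hab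

theorem norm_smul_sub_eq_norm_sub_smul {E : Type*} [NormedAddCommGroup E]
    [InnerProductSpace ℝ E] {a b : E} (ha : ‖a‖ = 1) (hb : ‖b‖ = 1) (c : ℝ) :
    ‖c • b - a‖ = ‖b - c • a‖ := by
  rw [← sq_eq_sq₀ (norm_nonneg _) (norm_nonneg _), norm_sub_sq_real, norm_sub_sq_real,
    norm_smul, norm_smul, real_inner_smul_left, real_inner_smul_right, ha, hb, real_inner_comm]
  ring

namespace ALSPaper

variable {n1 n2 m : ℕ}

def flatten : Matrix (Fin n1) (Fin n2) ℝ →ₗ[ℝ] EuclideanSpace ℝ (Fin n1 × Fin n2) :=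
  (WithLp.linearEquiv 2 ℝ _).symm.toLinearMap ∘ₗ (LinearEquiv.curry ℝ ℝ _ _).symm.toLinearMap

theorem flatten_apply (X : Matrix (Fin n1) (Fin n2) ℝ) (p : Fin n1 × Fin n2) :
    flatten X p = X p.1 p.2 := rfl

@[simp] theorem ofE_apply {n : ℕ} (x : EuclideanSpace ℝ (Fin n)) (i : Fin n) : ofE x i = x i := rfl

@[simp] theorem toE_apply {n : ℕ} (x : Fin n → ℝ) (i : Fin n) : toE x i = x i := rfl

theorem frobInner_eq_inner (X Y : Matrix (Fin n1) (Fin n2) ℝ) :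
    frobInner X Y = ⟪flatten X, flatten Y⟫ := by
  simp [frobInner, PiLp.inner_apply, flatten_apply, Fintype.sum_prod_type, mul_comm]

theorem frobNorm_eq_norm (X : Matrix (Fin n1) (Fin n2) ℝ) : frobNorm X = ‖flatten X‖ := by
  rw [frobNorm, frobInner_eq_inner, real_inner_self_eq_norm_sq, Real.sqrt_sq (norm_nonneg _)]

theorem frobInner_sub_left (X Y W : Matrix (Fin n1) (Fin n2) ℝ) :
    frobInner (X - Y) W = frobInner X W - frobInner Y W := by
  simp only [frobInner_eq_inner, map_sub, inner_sub_left]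

theorem frobNorm_add_le (X Y : Matrix (Fin n1) (Fin n2) ℝ) :
    frobNorm (X + Y) ≤ frobNorm X + frobNorm Y := by
  simpa only [frobNorm_eq_norm, map_add] using norm_add_le _ _

theorem frobNorm_vecMulVec (a : EuclideanSpace ℝ (Fin n1)) (b : EuclideanSpace ℝ (Fin n2)) :
    frobNorm (vecMulVec (ofE a) (ofE b)) = ‖a‖ * ‖b‖ := by
  have h : frobInner (vecMulVec (ofE a) (ofE b)) (vecMulVec (ofE a) (ofE b)) = ⟪a, a⟫ * ⟪b, b⟫ := by
    simp only [frobInner, vecMulVec_apply, ofE_apply, PiLp.inner_apply, RCLike.inner_apply,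
      conj_trivial, Finset.sum_mul_sum]
    exact Finset.sum_congr rfl fun i _ => Finset.sum_congr rfl fun j _ => by ring
  rw [frobNorm, h, real_inner_self_eq_norm_sq, real_inner_self_eq_norm_sq, ← mul_pow,
    Real.sqrt_sq (by positivity)]

theorem inner_toE_mulVec (M : Matrix (Fin n1) (Fin n2) ℝ) (x : EuclideanSpace ℝ (Fin n2))
    (y : EuclideanSpace ℝ (Fin n1)) :
    ⟪toE (M *ᵥ ofE x), y⟫ = frobInner M (vecMulVec (ofE y) (ofE x)) := by
  simp only [frobInner, PiLp.inner_apply, RCLike.inner_apply, conj_trivial, toE_apply,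
    Matrix.mulVec, dotProduct, vecMulVec_apply, ofE_apply, Finset.mul_sum]
  exact Finset.sum_congr rfl fun i _ => Finset.sum_congr rfl fun j _ => by ring

theorem calA_smul_add_smul (A : Fin m → Matrix (Fin n1) (Fin n2) ℝ) (s t : ℝ)
    (X Y : Matrix (Fin n1) (Fin n2) ℝ) :
    calA A (s • X + t • Y) = s • calA A X + t • calA A Y := by
  ext i
  simp only [calA, toE_apply, frobInner_eq_inner, map_add, map_smul, inner_add_right,
    real_inner_smul_right, PiLp.add_apply, PiLp.smul_apply, smul_eq_mul]
  ring

theorem frobInner_calAdj (A : Fin m → Matrix (Fin n1) (Fin n2) ℝ)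
    (z : EuclideanSpace ℝ (Fin m)) (Y : Matrix (Fin n1) (Fin n2) ℝ) :
    frobInner (calAdj A z) Y = ⟪z, calA A Y⟫ := by
  rw [calAdj, frobInner_eq_inner, map_sum, sum_inner]
  simp only [map_smul, real_inner_smul_left, ← frobInner_eq_inner]
  simp only [PiLp.inner_apply, RCLike.inner_apply, conj_trivial, calA, toE_apply, ofE_apply]
  exact Finset.sum_congr rfl fun i _ => by ring

theorem HasRIP.abs_inner_calA_sub_frobInner_le {A : Fin m → Matrix (Fin n1) (Fin n2) ℝ} {δ : ℝ}
    (hA : HasRIP A δ) {X Y : Matrix (Fin n1) (Fin n2) ℝ}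
    (hXY : ∀ s t : ℝ, (s • X + t • Y).rank ≤ 4) :
    |⟪calA A X, calA A Y⟫ - frobInner X Y| ≤ δ * (frobNorm X * frobNorm Y) := by
  simp only [frobInner_eq_inner, frobNorm_eq_norm]
  refine abs_inner_sub_inner_le_of_forall_abs_norm_sq_sub_le fun s t => abs_le.2 ?_
  have h := hA _ (hXY s t)
  rw [calA_smul_add_smul, frobNorm_eq_norm, map_add, map_smul, map_smul] at h
  constructor <;> linarith [h.1, h.2]

theorem e1_succ (k : ℕ) : e1 (k + 1) = PiLp.single 2 0 1 := by
  ext i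
  rw [PiLp.single_apply]
  simp only [e1, toE_apply, Fin.ext_iff, Fin.val_zero]

theorem norm_e1 {n : ℕ} (hn : n ≠ 0) : ‖e1 n‖ = 1 := by
  obtain ⟨k, rfl⟩ := Nat.exists_eq_succ_of_ne_zero hn
  rw [e1_succ, PiLp.norm_single, norm_one]

theorem norm_e1_le (n : ℕ) : ‖e1 n‖ ≤ 1 := by
  rcases eq_or_ne n 0 with rfl | hn
  · simp [Subsingleton.elim (e1 0) 0]
  · exact (norm_e1 hn).le

theorem norm_perp_le {n : ℕ} (x : EuclideanSpace ℝ (Fin n)) (t : ℝ) :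
    ‖perp x‖ ≤ ‖x - t • e1 n‖ := by
  rcases eq_or_ne n 0 with rfl | hn
  · simp [Subsingleton.elim (perp x) 0]
  have expand (s : ℝ) : ‖x - s • e1 n‖ ^ 2 = ‖x‖ ^ 2 - 2 * s * ⟪e1 n, x⟫ + s ^ 2 := by
    rw [norm_sub_sq_real, real_inner_smul_right, norm_smul, norm_e1 hn, Real.norm_eq_abs,
      mul_one, sq_abs, real_inner_comm]
    ring
  rw [← pow_le_pow_iff_left₀ (norm_nonneg _) (norm_nonneg _) two_ne_zero, perp, par, expand,
    expand]
  nlinarith [sq_nonneg (t - ⟪e1 n, x⟫)]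

theorem rank_smul_add_smul_le (s t : ℝ) (u w : EuclideanSpace ℝ (Fin n1))
    (v : EuclideanSpace ℝ (Fin n2)) :
    (s • (vecMulVec (ofE u) (ofE v) - vecMulVec (ofE (e1 n1)) (ofE (e1 n2))) +
      t • vecMulVec (ofE w) (ofE v)).rank ≤ 4 := by
  have h : s • (vecMulVec (ofE u) (ofE v) - vecMulVec (ofE (e1 n1)) (ofE (e1 n2))) +
      t • vecMulVec (ofE w) (ofE v) =
      vecMulVec (ofE (s • u + t • w)) (ofE v) + vecMulVec (ofE (-s • e1 n1)) (ofE (e1 n2)) := by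
    ext i j
    simp only [Matrix.add_apply, Matrix.smul_apply, Matrix.sub_apply, vecMulVec_apply, ofE_apply,
      smul_eq_mul, PiLp.add_apply, PiLp.smul_apply]
    ring
  rw [h]
  exact (Matrix.rank_vecMulVec_add_vecMulVec_le _ _ _ _).trans (by norm_num)

theorem frobNorm_vecMulVec_sub_le {u : EuclideanSpace ℝ (Fin n1)}
    {v : EuclideanSpace ℝ (Fin n2)} (hv : ‖v‖ = 1) :
    frobNorm (vecMulVec (ofE u) (ofE v) - vecMulVec (ofE (e1 n1)) (ofE (e1 n2))) ≤
      ‖u - ⟪e1 n2, v⟫ • e1 n1‖ + ‖perp v‖ := by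
  have hn2 : n2 ≠ 0 := by
    rintro rfl
    simp [Subsingleton.elim v 0] at hv
  have split : vecMulVec (ofE u) (ofE v) - vecMulVec (ofE (e1 n1)) (ofE (e1 n2)) =
      vecMulVec (ofE (u - ⟪e1 n2, v⟫ • e1 n1)) (ofE v) +
        vecMulVec (ofE (e1 n1)) (ofE (⟪e1 n2, v⟫ • v - e1 n2)) := by
    ext i j
    simp only [Matrix.sub_apply, vecMulVec_apply, ofE_apply, Matrix.add_apply, PiLp.sub_apply,
      PiLp.smul_apply, smul_eq_mul]
    ring
  have hperp : ‖⟪e1 n2, v⟫ • v - e1 n2‖ = ‖perp v‖ :=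
    norm_smul_sub_eq_norm_sub_smul (norm_e1 hn2) hv _
  calc _ ≤ ‖u - ⟪e1 n2, v⟫ • e1 n1‖ * ‖v‖ + ‖e1 n1‖ * ‖⟪e1 n2, v⟫ • v - e1 n2‖ := by
        rw [split, ← frobNorm_vecMulVec, ← frobNorm_vecMulVec]
        exact frobNorm_add_le _ _
    _ ≤ ‖u - ⟪e1 n2, v⟫ • e1 n1‖ + ‖perp v‖ := by
        rw [hv, mul_one, hperp]
        gcongr
        exact mul_le_of_le_one_left (norm_nonneg _) (norm_e1_le n1)

theorem NormalEq.norm_sq_eq {A : Fin m → Matrix (Fin n1) (Fin n2) ℝ}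
    {u : EuclideanSpace ℝ (Fin n1)} {v : EuclideanSpace ℝ (Fin n2)} (hNE : NormalEq A u v) :
    ‖u - ⟪e1 n2, v⟫ • e1 n1‖ ^ 2 =
      frobInner (vecMulVec (ofE u) (ofE v) - vecMulVec (ofE (e1 n1)) (ofE (e1 n2)))
          (vecMulVec (ofE (u - ⟪e1 n2, v⟫ • e1 n1)) (ofE v)) -
        ⟪calA A (vecMulVec (ofE u) (ofE v) - vecMulVec (ofE (e1 n1)) (ofE (e1 n2))),
          calA A (vecMulVec (ofE (u - ⟪e1 n2, v⟫ • e1 n1)) (ofE v))⟫ := by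
  rw [NormalEq, real_inner_comm] at hNE
  rw [← real_inner_self_eq_norm_sq]
  nth_rw 1 [sub_eq_of_eq_add' hNE]
  rw [inner_toE_mulVec, frobInner_sub_left, frobInner_calAdj]

theorem NormalEq.norm_sub_le {A : Fin m → Matrix (Fin n1) (Fin n2) ℝ} {δ : ℝ}
    (hA : HasRIP A δ) (hδ : 0 ≤ δ) {u : EuclideanSpace ℝ (Fin n1)}
    {v : EuclideanSpace ℝ (Fin n2)} (hv : ‖v‖ = 1) (hNE : NormalEq A u v) :
    ‖u - ⟪e1 n2, v⟫ • e1 n1‖ ≤ δ * (‖u - ⟪e1 n2, v⟫ • e1 n1‖ + ‖perp v‖) := by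
  have hdev := hA.abs_inner_calA_sub_frobInner_le
    (rank_smul_add_smul_le · · u (u - ⟪e1 n2, v⟫ • e1 n1) v)
  rw [frobNorm_vecMulVec, hv, mul_one] at hdev
  have hsq := hNE.norm_sq_eq
  have hZnorm := frobNorm_vecMulVec_sub_le (u := u) hv
  have hx := norm_nonneg (u - ⟪e1 n2, v⟫ • e1 n1)
  generalize ‖u - ⟪e1 n2, v⟫ • e1 n1‖ = x at *
  have key : x ^ 2 ≤ δ * (x + ‖perp v‖) * x := by
    nlinarith [(abs_le.1 hdev).1, mul_le_mul_of_nonneg_left hZnorm (mul_nonneg hδ hx)]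
  rcases hx.eq_or_lt with rfl | hx
  · positivity
  · nlinarith

/-- Lemma `perpdecrease`: if `𝒜` satisfies the RIP with constant `δ ∈ (0,1)`,
`v` is a unit vector and `u` satisfies the normal equation, then
(a) `‖u − ⟨v_⋆,v⟩u_⋆‖ ≤ (δ/(1−δ))‖v^⊥‖`, (b) `‖u^⊥‖ ≤ (δ/(1−δ))‖v^⊥‖`, and
(c) if moreover `δ ≤ 1/2`, then `‖u‖ ≤ 2`. -/
theorem statement10 {n1 n2 m : ℕ} (A : Fin m → Matrix (Fin n1) (Fin n2) ℝ) (δ : ℝ)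
    (hδ0 : 0 < δ) (hδ1 : δ < 1) (hRIP : HasRIP A δ)
    (v : EuclideanSpace ℝ (Fin n2)) (hv : ‖v‖ = 1)
    (u : EuclideanSpace ℝ (Fin n1)) (hNE : NormalEq A u v) :
    ‖u - ⟪e1 n2, v⟫ • e1 n1‖ ≤ δ / (1 - δ) * ‖perp v‖ ∧
    ‖perp u‖ ≤ δ / (1 - δ) * ‖perp v‖ ∧
    (δ ≤ 1 / 2 → ‖u‖ ≤ 2) := by
  have hδ : 0 < 1 - δ := by linarith
  have ha : ‖u - ⟪e1 n2, v⟫ • e1 n1‖ ≤ δ / (1 - δ) * ‖perp v‖ := by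
    rw [div_mul_eq_mul_div, le_div_iff₀ hδ]
    linarith [hNE.norm_sub_le hRIP hδ0.le hv]
  refine ⟨ha, (norm_perp_le u _).trans ha, fun hδ2 => ?_⟩
  have hperp : ‖perp v‖ ≤ 1 := by simpa [hv] using norm_perp_le v 0
  have hc : |⟪e1 n2, v⟫| ≤ 1 := by
    simpa [hv] using (abs_real_inner_le_norm _ _).trans
      (mul_le_of_le_one_left (norm_nonneg v) (norm_e1_le n2))
  have hw : ‖u - ⟪e1 n2, v⟫ • e1 n1‖ ≤ 1 :=
    ha.trans (mul_le_one₀ ((div_le_one hδ).2 (by linarith)) (norm_nonneg _) hperp)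
  calc ‖u‖ ≤ ‖u - ⟪e1 n2, v⟫ • e1 n1‖ + |⟪e1 n2, v⟫| * ‖e1 n1‖ := by
        simpa only [norm_smul, Real.norm_eq_abs] using norm_le_norm_sub_add u (⟪e1 n2, v⟫ • e1 n1)
    _ ≤ 1 + 1 * 1 := by gcongr; exact norm_e1_le n1
    _ = 2 := by norm_num

end ALSPaper
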